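/- arXiv:2203.12370 — 5 statements merged into one kernel-verified Lean document; each statement's English description precedes it below -/
import Mathlib

section
/- Let g be an upper unitriangular n×n matrix over a field K (i.e., g is upper triangular with all diagonal entries equal to 1), and let Y be any n×n matrix. If I ⊆ {1,…,n} is an integer interval ending at n (i.e., I = {k, k+1, …, n} for some k) and J ⊆ {1,…,n} is any subset with |I| = |J|, then the minor of g·Y with rows I and columns J equals the minor of Y with rows I and columns J. -/
/-!
Since `g` is upper triangular, row `i` of `g * Y` only involves the rows `k ≥ i` of `Y`. When the
row set `I` is a final segment, this makes the `I × J` block of `g * Y` the product of the `I × I`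
block of `g` with the `I × J` block of `Y`. The `I × I` block of `g` is again unitriangular, so it
has determinant one.
-/

namespace Matrix

variable {α ι κ κ' R : Type*} [LinearOrder α]

theorem IsUpperTriangular.submatrix_of_strictMono [Zero R] [LinearOrder ι] {g : Matrix α α R}
    (hg : g.IsUpperTriangular) {r : ι → α} (hr : StrictMono r) :
    (g.submatrix r r).IsUpperTriangular :=
  fun _ _ hij => hg (hr hij)

theorem submatrix_mul_of_isUpperTriangular_of_isUpperSet [Fintype α] [Fintype ι]
    [NonUnitalNonAssocSemiring R] {g : Matrix α α R} (hg : g.IsUpperTriangular)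
    (Y : Matrix α κ' R) {r : ι → α} (hr : Function.Injective r) (hup : IsUpperSet (Set.range r))
    (c : κ → κ') :
    (g * Y).submatrix r c = g.submatrix r r * Y.submatrix r c := by
  ext t j
  refine (Fintype.sum_of_injective r hr _ _ (fun k hk => ?_) fun _ => rfl).symm
  have hkt : k < r t := lt_of_not_ge fun htk => hk (hup htk ⟨t, rfl⟩)
  exact mul_eq_zero_of_left (hg hkt) _

theorem det_submatrix_mul_of_unitriangular [Fintype α] [Fintype ι] [LinearOrder ι] [CommRing R]
    {g : Matrix α α R} (hg : g.IsUpperTriangular) (hdiag : ∀ i, g i i = 1)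
    (Y : Matrix α κ R) {r : ι → α} (hr : StrictMono r) (hup : IsUpperSet (Set.range r))
    (c : ι → κ) :
    ((g * Y).submatrix r c).det = (Y.submatrix r c).det := by
  rw [submatrix_mul_of_isUpperTriangular_of_isUpperSet hg Y hr.injective hup, det_mul,
    det_of_isUpperTriangular (hg.submatrix_of_strictMono hr)]
  simp [hdiag]

end Matrix

/-- minors of g·Y with row set a terminal integer interval ending at n
coincide with the corresponding minors of Y when g is upper unitriangular. -/
theorem stmt1 {K : Type*} [Field K] {n : ℕ} (m : ℕ) (hm : m ≤ n)
    (g Y : Matrix (Fin n) (Fin n) K)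
    (hdiag : ∀ i, g i i = 1)
    (hlow : ∀ i j : Fin n, j < i → g i j = 0)
    (c : Fin m → Fin n) :
    ((g * Y).submatrix
        (fun t : Fin m => (⟨n - m + t.val, by have := t.isLt; omega⟩ : Fin n)) c).det
      = (Y.submatrix
        (fun t : Fin m => (⟨n - m + t.val, by have := t.isLt; omega⟩ : Fin n)) c).det := by
  refine Matrix.det_submatrix_mul_of_unitriangular (fun i j => hlow i j) hdiag Y
    (fun s t hst => Fin.mk_lt_mk.mpr (by omega)) ?_ c
  rintro _ k htk ⟨t, rfl⟩
  have hk : n - m ≤ k.val := (Nat.le_add_right _ _).trans htk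
  exact ⟨⟨k.val - (n - m), by omega⟩, Fin.ext (by simp only; omega)⟩
end

section
/- Let F be a field extension of K generated by finitely many elements ξ_α indexed by a linearly ordered finite set A, and assume the ξ_α are algebraically independent over K. Suppose for each α, η_α = φ_α ξ_α + ψ_α where φ_α ≠ 0 and φ_α, ψ_α lie in the subfield of F generated over K by {ξ_β : β < α}. Then the family {η_α} is algebraically independent over K and generates F over K. -/
/-!
Induct along the order. If `η` restricted to a lower set `s` is algebraically independent and
generates the same field `L` as `ξ` restricted to `s`, then for the next index `α` the element
`ξ α` is transcendental over `L` by independence of `ξ`, hence so is its affine image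
`η α = φ ξ α + ψ` with coefficients in `L`; and `ξ α` and `η α` generate the
same extension of `L`.
-/

open Polynomial IntermediateField

theorem Transcendental.mul_add {L E : Type*} [Field L] [CommRing E] [Algebra L E] {x : E}
    (hx : Transcendental L x) {a : L} (ha : a ≠ 0) (b : L) :
    Transcendental L (algebraMap L E a * x + algebraMap L E b) := by
  have h := hx.aeval (C a * X + C b) (by rw [natDegree_linear ha]; exact one_ne_zero)
    (by rw [leadingCoeff_linear ha]; exact mem_nonZeroDivisors_of_ne_zero ha)
  simpa [Algebra.smul_def] using h

namespace IntermediateField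

variable {K F : Type*} [Field K] [Field F] [Algebra K F]

theorem adjoin_insert_eq_of_mem {S : Set F} {x y : F} (hx : x ∈ adjoin K (insert y S))
    (hy : y ∈ adjoin K (insert x S)) : adjoin K (insert x S) = adjoin K (insert y S) := by
  refine le_antisymm ?_ ?_ <;> rw [adjoin_le_iff, Set.insert_subset_iff]
  · exact ⟨hx, (Set.subset_insert y S).trans (subset_adjoin K _)⟩
  · exact ⟨hy, (Set.subset_insert x S).trans (subset_adjoin K _)⟩

theorem adjoin_insert_mul_add_coe (L : IntermediateField K F) {φ ψ : F} (hφ : φ ∈ L)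
    (hψ : ψ ∈ L) (hφ0 : φ ≠ 0) (x : F) :
    adjoin K (insert (φ * x + ψ) (L : Set F)) = adjoin K (insert x (L : Set F)) := by
  have hL : ∀ z y : F, z ∈ L → z ∈ adjoin K (insert y (L : Set F)) := fun z y hz ↦
    subset_adjoin K _ (Set.mem_insert_of_mem y hz)
  have hx : x ∈ adjoin K (insert x (L : Set F)) := subset_adjoin K _ (Set.mem_insert x _)
  have hy : φ * x + ψ ∈ adjoin K (insert (φ * x + ψ) (L : Set F)) :=
    subset_adjoin K _ (Set.mem_insert _ _)
  refine (adjoin_insert_eq_of_mem ?_ ?_).symm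
  · have h := mul_mem (inv_mem (hL φ _ hφ)) (sub_mem hy (hL ψ _ hψ))
    rwa [add_sub_cancel_right, inv_mul_cancel_left₀ hφ0] at h
  · exact add_mem (mul_mem (hL φ _ hφ) hx) (hL ψ _ hψ)

theorem adjoin_insert_mul_add {S T : Set F} (hST : adjoin K S = adjoin K T) {φ ψ : F}
    (hφ : φ ∈ adjoin K S) (hψ : ψ ∈ adjoin K S) (hφ0 : φ ≠ 0) (x : F) :
    adjoin K (insert (φ * x + ψ) T) = adjoin K (insert x S) := by
  rw [← adjoin_insert_adjoin, ← hST, adjoin_insert_mul_add_coe _ hφ hψ hφ0,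
    adjoin_insert_adjoin]

end IntermediateField

section Triangular

variable {K F A : Type*} [Field K] [Field F] [Algebra K F] {ξ η : A → F}

theorem AlgebraicIndepOn.insert_and_adjoin_eq_of_mul_add (hind : AlgebraicIndependent K ξ)
    {s : Set A} {i : A} (hi : i ∉ s) (hs : AlgebraicIndepOn K η s)
    (hadj : adjoin K (η '' s) = adjoin K (ξ '' s))
    {φ ψ : F} (hφ : φ ∈ adjoin K (ξ '' s)) (hψ : ψ ∈ adjoin K (ξ '' s)) (hφ0 : φ ≠ 0)
    (hηi : η i = φ * ξ i + ψ) :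
    AlgebraicIndepOn K η (insert i s) ∧
      adjoin K (η '' insert i s) = adjoin K (ξ '' insert i s) := by
  refine ⟨hs.insert ?_, ?_⟩
  · rw [← transcendental_adjoin_iff, hadj, hηi]
    have hξi := transcendental_adjoin_iff.mpr (hind.transcendental_adjoin hi)
    exact hξi.mul_add (a := ⟨φ, hφ⟩) (fun h ↦ hφ0 congr(($h : F))) ⟨ψ, hψ⟩
  · rw [Set.image_insert_eq, Set.image_insert_eq, hηi]
    exact adjoin_insert_mul_add hadj.symm hφ hψ hφ0 _

theorem algebraicIndepOn_and_adjoin_eq_of_triangular [LinearOrder A]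
    (hind : AlgebraicIndependent K ξ)
    (hη : ∀ α : A, ∃ φ ψ : F,
      φ ∈ adjoin K (ξ '' Set.Iio α) ∧ ψ ∈ adjoin K (ξ '' Set.Iio α) ∧
      φ ≠ 0 ∧ η α = φ * ξ α + ψ)
    (s : Finset A) (hs : IsLowerSet (s : Set A)) :
    AlgebraicIndepOn K η s ∧ adjoin K (η '' s) = adjoin K (ξ '' s) := by
  classical
  induction s using Finset.induction_on_max with
  | empty => simpa [AlgebraicIndepOn] using (algebraMap K F).injective
  | insert α s hlt ih =>
    rw [Finset.coe_insert] at hs ⊢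
    have hIio : (s : Set A) = Set.Iio α := Set.ext fun β ↦
      ⟨hlt β, fun hβ ↦ (hs (le_of_lt hβ) (Set.mem_insert α _)).resolve_left hβ.ne⟩
    obtain ⟨φ, ψ, hφ, hψ, hφ0, hηα⟩ := hη α
    obtain ⟨hind_s, hadj_s⟩ := ih (hIio ▸ isLowerSet_Iio α)
    rw [← hIio] at hφ hψ
    exact AlgebraicIndepOn.insert_and_adjoin_eq_of_mul_add hind (fun h ↦ (hlt α h).false)
      hind_s hadj_s hφ hψ hφ0 hηα

end Triangular

/-- triangular transformation lemma: if {ξ_α} is a finite system of free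
generators of F over K indexed by a linearly ordered set, and η_α = φ_α ξ_α + ψ_α with
φ_α ≠ 0, φ_α, ψ_α in the subfield generated by the ξ_β with β < α, then {η_α} is again a
system of free generators of F over K. -/
theorem stmt10 {K F : Type*} [Field K] [Field F] [Algebra K F]
    {A : Type*} [Finite A] [LinearOrder A]
    (ξ η : A → F)
    (hind : AlgebraicIndependent K ξ)
    (hgen : IntermediateField.adjoin K (Set.range ξ) = ⊤)
    (hη : ∀ α : A, ∃ φ ψ : F,
      φ ∈ IntermediateField.adjoin K (ξ '' {β | β < α}) ∧
      ψ ∈ IntermediateField.adjoin K (ξ '' {β | β < α}) ∧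
      φ ≠ 0 ∧ η α = φ * ξ α + ψ) :
    AlgebraicIndependent K η ∧ IntermediateField.adjoin K (Set.range η) = ⊤ := by
  have := Fintype.ofFinite A
  have h := algebraicIndepOn_and_adjoin_eq_of_triangular hind hη Finset.univ
    (by simpa using isLowerSet_univ)
  rwa [Finset.coe_univ, AlgebraicIndepOn.univ, Set.image_univ, Set.image_univ, hgen] at h
end

section
/- Let B be the group of invertible upper triangular n×n matrices over an infinite field K, let N be the group of upper unitriangular matrices, and let w₀ be the permutation matrix of the longest element (the anti-diagonal permutation). Then the set N·w₀·B is Zariski-dense in GL(n,K). -/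
/-!
If all leading principal minors of `w₀ X` are nonzero, Gaussian elimination without pivoting
factors `w₀ X = L U` with `L` lower unitriangular and `U` upper triangular, and then
`X = (w₀ L w₀) w₀ U ∈ N w₀ B`. So `p` times the product of these minors, which are polynomials
in the entries of `X` taking the value `1` at `X = w₀`, vanishes on all of `Kⁿˣⁿ`. As `K` is
infinite, that product is the zero polynomial, hence `p = 0`.
-/

open Matrix MvPolynomial

theorem MvPolynomial.eq_zero_of_eval_eq_zero_of_eval_ne_zero {R σ : Type*} [CommRing R]
    [IsDomain R] [Infinite R] {p q : MvPolynomial σ R} (hq : q ≠ 0)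
    (h : ∀ x, eval x q ≠ 0 → eval x p = 0) : p = 0 := by
  have hpq : p * q = 0 := MvPolynomial.funext fun x => by
    by_cases hx : eval x q = 0 <;> simp [hx, h]
  exact (mul_eq_zero.mp hpq).resolve_right hq

namespace Matrix

section leadingMinor

variable {R : Type*} [CommRing R] {n : ℕ}

def leadingMinor (M : Matrix (Fin n) (Fin n) R) (k : Fin (n + 1)) : R :=
  (M.submatrix (Fin.castLE k.is_le) (Fin.castLE k.is_le)).det

theorem leadingMinor_last (M : Matrix (Fin n) (Fin n) R) :
    M.leadingMinor (Fin.last n) = M.det := by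
  simp [leadingMinor]

theorem leadingMinor_one (k : Fin (n + 1)) :
    (1 : Matrix (Fin n) (Fin n) R).leadingMinor k = 1 := by
  rw [leadingMinor, submatrix_one _ (Fin.castLE_injective _), det_one]

theorem leadingMinor_submatrix_castSucc (M : Matrix (Fin (n + 1)) (Fin (n + 1)) R)
    (k : Fin (n + 1)) :
    (M.submatrix Fin.castSucc Fin.castSucc).leadingMinor k = M.leadingMinor k.castSucc :=
  rfl

theorem _root_.RingHom.map_leadingMinor {S : Type*} [CommRing S] (f : R →+* S)
    (M : Matrix (Fin n) (Fin n) R) (k : Fin (n + 1)) :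
    f (M.leadingMinor k) = (M.map f).leadingMinor k :=
  f.map_det _

end leadingMinor

section border

variable {R : Type*} {n : ℕ}

def border (A : Matrix (Fin n) (Fin n) R) (b c : Fin n → R) (d : R) :
    Matrix (Fin (n + 1)) (Fin (n + 1)) R :=
  of fun i j => Fin.lastCases (Fin.lastCases d c j) (fun i => Fin.lastCases (b i) (A i) j) i

variable (A : Matrix (Fin n) (Fin n) R) (b c : Fin n → R) (d : R)

@[simp] theorem border_castSucc_castSucc (i j : Fin n) :
    border A b c d i.castSucc j.castSucc = A i j := by simp [border]

@[simp] theorem border_castSucc_last (i : Fin n) :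
    border A b c d i.castSucc (Fin.last n) = b i := by
  simp [border]

@[simp] theorem border_last_castSucc (j : Fin n) :
    border A b c d (Fin.last n) j.castSucc = c j := by
  simp [border]

@[simp] theorem border_last_last : border A b c d (Fin.last n) (Fin.last n) = d := by
  simp [border]

theorem eq_border (M : Matrix (Fin (n + 1)) (Fin (n + 1)) R) :
    M = border (M.submatrix Fin.castSucc Fin.castSucc) (fun i => M i.castSucc (Fin.last n))
      (fun j => M (Fin.last n) j.castSucc) (M (Fin.last n) (Fin.last n)) := by
  ext i j
  induction i using Fin.lastCases <;> induction j using Fin.lastCases <;> simp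

theorem border_mul_border [CommRing R] (A' : Matrix (Fin n) (Fin n) R) (b' c' : Fin n → R)
    (d' : R) :
    border A b c d * border A' b' c' d' =
      border (A * A' + vecMulVec b c') (A *ᵥ b' + d' • b) (c ᵥ* A' + d • c')
        (c ⬝ᵥ b' + d * d') := by
  ext i j
  induction i using Fin.lastCases <;> induction j using Fin.lastCases <;>
    simp [mul_apply, Fin.sum_univ_castSucc, mulVec, vecMul, dotProduct, vecMulVec_apply, mul_comm]

variable [Zero R]

theorem isUpperTriangular_border {A : Matrix (Fin n) (Fin n) R} (hA : A.IsUpperTriangular) :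
    (border A b 0 d).IsUpperTriangular := by
  intro i j hji
  induction i using Fin.lastCases <;> induction j using Fin.lastCases
  · exact absurd hji (lt_irrefl _)
  · simp
  · exact absurd hji (Fin.castSucc_lt_last _).not_gt
  · exact (border_castSucc_castSucc ..).trans (hA hji)

theorem isLowerTriangular_border {A : Matrix (Fin n) (Fin n) R} (hA : A.IsLowerTriangular) :
    (border A 0 c d).IsLowerTriangular := by
  intro i j hij
  induction i using Fin.lastCases <;> induction j using Fin.lastCases
  · exact absurd hij (lt_irrefl _)
  · exact absurd hij (Fin.castSucc_lt_last _).not_gt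
  · simp
  · exact (border_castSucc_castSucc ..).trans (hA hij)

end border

theorem revPerm_permMatrix_mul_self {R : Type*} [NonAssocSemiring R] {n : ℕ} :
    Fin.revPerm.permMatrix R * Fin.revPerm.permMatrix R = (1 : Matrix (Fin n) (Fin n) R) := by
  rw [← permMatrix_mul, ← permMatrix_one]
  congr
  ext i
  simp

theorem det_eq_one_of_isLowerTriangular {m R : Type*} [Fintype m] [LinearOrder m] [CommRing R]
    {L : Matrix m m R} (hL : L.IsLowerTriangular) (hL1 : ∀ i, L i i = 1) : L.det = 1 := by
  simp [det_of_isLowerTriangular L hL, hL1]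

section LU

variable {F : Type*} [Field F]

theorem exists_lowerUnitriangular_mul_upperTriangular :
    ∀ {n : ℕ} (M : Matrix (Fin n) (Fin n) F), (∀ k : Fin n, M.leadingMinor k.castSucc ≠ 0) →
      ∃ L U : Matrix (Fin n) (Fin n) F,
        L.IsLowerTriangular ∧ (∀ i, L i i = 1) ∧ U.IsUpperTriangular ∧ M = L * U
  | 0, M, _ => ⟨1, 1, fun i => i.elim0, fun i => i.elim0, fun i => i.elim0, Subsingleton.elim _ _⟩
  | n + 1, M, hM => by
    obtain ⟨L, U, hL, hL1, hU, hLU⟩ :=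
      exists_lowerUnitriangular_mul_upperTriangular (M.submatrix Fin.castSucc Fin.castSucc)
        fun k => (leadingMinor_submatrix_castSucc M k.castSucc).trans_ne (hM k.castSucc)
    have hdetL : IsUnit L.det := by simp [det_eq_one_of_isLowerTriangular hL hL1]
    have hdetU : IsUnit U.det := by
      have h := hM (Fin.last n)
      rw [← leadingMinor_submatrix_castSucc, leadingMinor_last, hLU, det_mul,
        det_eq_one_of_isLowerTriangular hL hL1, one_mul] at h
      exact h.isUnit
    set b : Fin n → F := fun i => M i.castSucc (Fin.last n)
    set c : Fin n → F := fun j => M (Fin.last n) j.castSucc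
    set d := M (Fin.last n) (Fin.last n)
    -- the last row of `L` and the last column of `U` are forced by the last row and column of `M`
    refine ⟨border L 0 (c ᵥ* U⁻¹) 1, border U (L⁻¹ *ᵥ b) 0 (d - c ᵥ* U⁻¹ ⬝ᵥ L⁻¹ *ᵥ b),
      isLowerTriangular_border _ _ hL, fun i => ?_, isUpperTriangular_border _ _ hU, ?_⟩
    · induction i using Fin.lastCases <;> simp [hL1]
    · rw [border_mul_border, eq_border M, vecMul_vecMul, nonsing_inv_mul _ hdetU, mulVec_mulVec,
        mul_nonsing_inv _ hdetL, ← hLU]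
      simp [b, c, d]

theorem exists_eq_mul_revPerm_mul_of_leadingMinor_ne_zero {n : ℕ}
    (X : Matrix (Fin n) (Fin n) F) (hX : ∀ k, (Fin.revPerm.permMatrix F * X).leadingMinor k ≠ 0) :
    ∃ u b : Matrix (Fin n) (Fin n) F, (∀ i, u i i = 1) ∧ u.IsUpperTriangular ∧
      (∀ i, b i i ≠ 0) ∧ b.IsUpperTriangular ∧ X = u * Fin.revPerm.permMatrix F * b := by
  set w := Fin.revPerm.permMatrix F (n := Fin n)
  have hww : w * w = 1 := revPerm_permMatrix_mul_self
  have hconj : ∀ L : Matrix (Fin n) (Fin n) F, ∀ i j, (w * L * w) i j = L i.rev j.rev := by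
    intro L i j
    rw [PEquiv.toMatrix_toPEquiv_mul, PEquiv.mul_toMatrix_toPEquiv]
    rfl
  obtain ⟨L, U, hL, hL1, hU, hLU⟩ :=
    exists_lowerUnitriangular_mul_upperTriangular (w * X) fun k => hX k.castSucc
  have hUdiag : ∀ i, U i i ≠ 0 := by
    have h := hX (Fin.last n)
    rw [leadingMinor_last, hLU, det_mul, det_eq_one_of_isLowerTriangular hL hL1, one_mul,
      det_of_isUpperTriangular hU] at h
    exact fun i => Finset.prod_ne_zero_iff.mp h i (Finset.mem_univ i)
  refine ⟨w * L * w, U, fun i => by rw [hconj, hL1], fun i j hji => ?_, hUdiag, hU, ?_⟩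
  · rw [hconj]
    exact hL (Fin.rev_lt_rev.mpr hji)
  · rw [mul_assoc (w * L), hww, mul_one, mul_assoc, ← hLU, ← mul_assoc, hww, one_mul]

end LU

end Matrix

/-- the big Bruhat cell N w₀ B is Zariski-dense in GL(n,K): every polynomial
in the matrix entries vanishing on N w₀ B vanishes on all invertible matrices. -/
theorem stmt11 {K : Type*} [Field K] [Infinite K] {n : ℕ}
    (w₀ : Matrix (Fin n) (Fin n) K)
    (hw : ∀ i j : Fin n, w₀ i j = if (i : ℕ) + (j : ℕ) + 1 = n then 1 else 0)
    (p : MvPolynomial (Fin n × Fin n) K)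
    (hvanish : ∀ u b : Matrix (Fin n) (Fin n) K,
      (∀ i, u i i = 1) → (∀ i j : Fin n, j < i → u i j = 0) →
      (∀ i, b i i ≠ 0) → (∀ i j : Fin n, j < i → b i j = 0) →
      MvPolynomial.eval (fun st => (u * w₀ * b) st.1 st.2) p = 0) :
    ∀ X : Matrix (Fin n) (Fin n) K, IsUnit X.det →
      MvPolynomial.eval (fun st => X st.1 st.2) p = 0 := by
  have hw₀ : w₀ = Fin.revPerm.permMatrix K := by
    ext i j
    simp only [hw, PEquiv.toMatrix_apply, Equiv.toPEquiv_apply, Option.mem_some_iff,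
      Fin.revPerm_apply]
    exact if_congr (by rw [Fin.ext_iff, Fin.val_rev]; omega) rfl rfl
  subst hw₀
  suffices p = 0 by
    intro X _
    rw [this, map_zero]
  set G := (mvPolynomialX (Fin n) (Fin n) K).submatrix Fin.revPerm id
  have hG : ∀ x : Fin n × Fin n → K,
      G.map (eval x) = Fin.revPerm.permMatrix K * of fun i j => x (i, j) := by
    intro x
    rw [PEquiv.toMatrix_toPEquiv_mul]
    ext i j
    simp [G]
  refine eq_zero_of_eval_eq_zero_of_eval_ne_zero (q := ∏ k, G.leadingMinor k) ?_ fun x hx => ?_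
  · refine Finset.prod_ne_zero_iff.mpr fun k _ hk => ?_
    have h := congrArg (eval fun st => Fin.revPerm.permMatrix K st.1 st.2) hk
    rw [RingHom.map_leadingMinor, hG, map_zero] at h
    erw [revPerm_permMatrix_mul_self, leadingMinor_one] at h
    exact one_ne_zero h
  · rw [map_prod, Finset.prod_ne_zero_iff] at hx
    obtain ⟨u, b, hu1, hu, hb, hb', hX⟩ := exists_eq_mul_revPerm_mul_of_leadingMinor_ne_zero
      (of fun i j => x (i, j)) fun k => by simpa [RingHom.map_leadingMinor, hG] using hx k
    have := hvanish u b hu1 (fun i j h => hu h) hb (fun i j h => hb' h)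
    rwa [← hX] at this
end

section
/- Let K be a field of characteristic zero and U a unipotent algebraic group acting rationally on an irreducible affine variety V over K. Then the field of U-invariant rational functions K(V)^U is the field of fractions of the algebra of U-invariant regular functions K[V]^U. -/
/-!
Let `x ∈ K(V)^U`. Its denominators `b ∈ K[V]` (those with `b x ∈ K[V]`) form a nonzero
`U`-stable subspace `D`. Local finiteness gives a finite-dimensional `U`-stable subspace of `D`,
and on it `U` acts by unipotent operators, so by Kolchin's theorem it contains a nonzero
invariant `b`; then `a = b x` is invariant as well and `x = a / b`.

Kolchin's theorem in characteristic zero: the span of the operators `ρ g - 1` is closed under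
multiplication, since `(ρ g - 1) (ρ h - 1) = (ρ (g h) - 1) - (ρ g - 1) - (ρ h - 1)`, and
consists of trace-zero operators. So every `s` in it has `tr (s ^ k) = 0` for all `k ≥ 1`: the
power sums of its eigenvalues, weighted by multiplicity, vanish, which forces all eigenvalues
to be `0`. Engel's theorem then yields a common null vector.
-/

open Module

open Polynomial in
theorem eq_zero_of_forall_sum_mul_pow_eq_zero {R : Type*} [CommRing R] [IsDomain R]
    {s : Finset R} {d : R → R} (hd : ∀ μ ∈ s, d μ ≠ 0)
    (h : ∀ k ≠ 0, ∑ μ ∈ s, d μ * μ ^ k = 0) {μ : R} (hμ : μ ∈ s) : μ = 0 := by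
  classical
  set p : R[X] := ∏ ν ∈ s.erase μ, (X - C ν)
  have hp : ∀ ν ∈ s, ν ≠ μ → p.eval ν = 0 := fun ν hν hne ↦ by
    rw [eval_prod]; exact Finset.prod_eq_zero (Finset.mem_erase.2 ⟨hne, hν⟩) (by simp)
  have hpμ : p.eval μ ≠ 0 := by simp [p, eval_prod, Finset.prod_eq_zero_iff, sub_eq_zero]
  -- `ν * p(ν)` is a combination of the powers `ν ^ (i + 1)`, whose weighted sums vanish.
  have hsum : ∑ ν ∈ s, d ν * (ν * p.eval ν) = 0 := by
    simp_rw [eval_eq_sum_range, Finset.mul_sum]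
    rw [Finset.sum_comm]
    refine Finset.sum_eq_zero fun i _ ↦ ?_
    calc ∑ ν ∈ s, d ν * (ν * (p.coeff i * ν ^ i))
        = p.coeff i * ∑ ν ∈ s, d ν * ν ^ (i + 1) := by
          rw [Finset.mul_sum]; exact Finset.sum_congr rfl fun ν _ ↦ by ring
      _ = 0 := by rw [h (i + 1) i.succ_ne_zero, mul_zero]
  rw [Finset.sum_eq_single_of_mem μ hμ fun ν hν hne ↦ by
    rw [hp ν hν hne, mul_zero, mul_zero]] at hsum
  exact (mul_eq_zero.1 ((mul_eq_zero.1 hsum).resolve_left (hd μ hμ))).resolve_right hpμ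

namespace Module.End

theorem trace_pow_of_isNilpotent_sub_algebraMap {R M : Type*} [CommRing R] [IsReduced R]
    [AddCommGroup M] [Module R M] [Module.Free R M] [Module.Finite R M] {g : End R M} (μ : R)
    (hg : IsNilpotent (g - algebraMap R _ μ)) (k : ℕ) :
    LinearMap.trace R M (g ^ k) = μ ^ k * finrank R M := by
  induction k with
  | zero => simp
  | succ k ih =>
    rw [pow_succ, mul_eq_comp,
      LinearMap.trace_comp_eq_mul_of_commute_of_isNilpotent μ (Commute.pow_left rfl k) hg, ih]
    ring

theorem trace_pow_eq_sum_finrank_maxGenEigenspace_mul_pow {K V : Type*} [Field K]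
    [IsAlgClosed K] [AddCommGroup V] [Module K V] [FiniteDimensional K V] (f : End K V)
    (hf : {μ | f.maxGenEigenspace μ ≠ ⊥}.Finite) (k : ℕ) :
    LinearMap.trace K V (f ^ k) =
      ∑ μ ∈ hf.toFinset, finrank K (f.maxGenEigenspace μ) * μ ^ k := by
  classical
  have hmaps (μ : K) := f.mapsTo_maxGenEigenspace_of_comm rfl μ
  have hpow (μ : K) := f.mapsTo_maxGenEigenspace_of_comm (Commute.pow_right rfl k) μ
  have hds := DirectSum.isInternal_submodule_of_iSupIndep_of_iSup_eq_top
    f.independent_maxGenEigenspace f.iSup_maxGenEigenspace_eq_top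
  rw [LinearMap.trace_eq_sum_trace_restrict' hds hf hpow]
  refine Finset.sum_congr rfl fun μ _ ↦ ?_
  rw [← pow_restrict k (hmaps μ), trace_pow_of_isNilpotent_sub_algebraMap μ
    (f.isNilpotent_restrict_maxGenEigenspace_sub_algebraMap μ), mul_comm]

theorem isNilpotent_of_forall_trace_pow_eq_zero_of_isAlgClosed {K V : Type*} [Field K]
    [CharZero K] [IsAlgClosed K] [AddCommGroup V] [Module K V] [FiniteDimensional K V]
    {f : End K V} (h : ∀ k ≠ 0, LinearMap.trace K V (f ^ k) = 0) : IsNilpotent f := by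
  have hf := WellFoundedGT.finite_ne_bot_of_iSupIndep f.independent_maxGenEigenspace
  have hzero (μ : K) (hμ : f.maxGenEigenspace μ ≠ ⊥) : μ = 0 := by
    refine eq_zero_of_forall_sum_mul_pow_eq_zero
      (d := fun ν ↦ (finrank K (f.maxGenEigenspace ν) : K))
      (fun ν hν ↦ ?_) (fun k hk ↦ ?_) (hf.mem_toFinset.2 hμ)
    · exact Nat.cast_ne_zero.2 (Submodule.finrank_eq_zero.not.2 (hf.mem_toFinset.1 hν))
    · rw [← trace_pow_eq_sum_finrank_maxGenEigenspace_mul_pow, h k hk]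
  have htop : f.maxGenEigenspace 0 = ⊤ := by
    rw [eq_top_iff, ← f.iSup_maxGenEigenspace_eq_top]
    refine iSup_le fun μ ↦ ?_
    rcases eq_or_ne (f.maxGenEigenspace μ) ⊥ with hμ | hμ
    · simp [hμ]
    · rw [hzero μ hμ]
  refine isNilpotent_iff_of_finite.2 fun v ↦ ?_
  obtain ⟨k, hk⟩ := (mem_maxGenEigenspace f 0 v).1 (htop ▸ Submodule.mem_top)
  exact ⟨k, by simpa using hk⟩

theorem isNilpotent_of_forall_trace_pow_eq_zero {K V : Type*} [Field K] [CharZero K]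
    [AddCommGroup V] [Module K V] [FiniteDimensional K V] {f : End K V}
    (h : ∀ k ≠ 0, LinearMap.trace K V (f ^ k) = 0) : IsNilpotent f := by
  let L := AlgebraicClosure K
  have hinj : Function.Injective (baseChangeHom K L V) := LinearMap.baseChangeHom_injective K V L
  rw [← IsNilpotent.map_iff hinj]
  refine isNilpotent_of_forall_trace_pow_eq_zero_of_isAlgClosed fun k hk ↦ ?_
  rw [← map_pow]
  change LinearMap.trace L _ ((f ^ k).baseChange L) = 0
  rw [LinearMap.trace_baseChange, h k hk, map_zero]

end Module.End

section
attribute [local instance] LieRing.ofAssociativeRing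

theorem NonUnitalSubalgebra.exists_ne_zero_forall_apply_eq_zero_of_isNilpotent {K V : Type*}
    [Field K] [AddCommGroup V] [Module K V] [FiniteDimensional K V] [Nontrivial V]
    (S : NonUnitalSubalgebra K (End K V)) (hS : ∀ s ∈ S, IsNilpotent s) :
    ∃ v : V, v ≠ 0 ∧ ∀ s ∈ S, s v = 0 := by
  let L : LieSubalgebra K (End K V) :=
    { S.toSubmodule with
      lie_mem' := fun hx hy ↦ S.toSubmodule.sub_mem (S.mul_mem hx hy) (S.mul_mem hy hx) }
  have : LieModule.IsNilpotent L V := LieAlgebra.isEngelian_of_isNoetherian V fun x ↦ by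
    rw [LieSubalgebra.toEnd_eq, LieModule.toEnd_module_end]
    exact hS x x.2
  have := LieModule.nontrivial_max_triv_of_isNilpotent K L V
  obtain ⟨⟨v, hv⟩, hv0⟩ := exists_ne (0 : LieModule.maxTrivSubmodule K L V)
  exact ⟨v, fun h ↦ hv0 (by simp [h]), fun s hs ↦ hv ⟨s, hs⟩⟩

end

theorem NonUnitalSubalgebra.isNilpotent_of_forall_trace_eq_zero {K V : Type*} [Field K]
    [CharZero K] [AddCommGroup V] [Module K V] [FiniteDimensional K V]
    (S : NonUnitalSubalgebra K (End K V)) (hS : ∀ s ∈ S, LinearMap.trace K V s = 0)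
    {s : End K V} (hs : s ∈ S) : IsNilpotent s := by
  have hpow (j : ℕ) : s ^ (j + 1) ∈ S := by
    induction j with
    | zero => simpa using hs
    | succ j ih => rw [pow_succ]; exact S.mul_mem ih hs
  refine End.isNilpotent_of_forall_trace_pow_eq_zero fun k hk ↦ ?_
  obtain ⟨j, rfl⟩ := Nat.exists_eq_succ_of_ne_zero hk
  exact hS _ (hpow j)

theorem Representation.invariants_ne_bot_of_isNilpotent_sub_one {K V G : Type*} [Field K]
    [CharZero K] [AddCommGroup V] [Module K V] [FiniteDimensional K V] [Nontrivial V] [Group G]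
    (ρ : Representation K G V) (hρ : ∀ g, IsNilpotent (ρ g - 1)) : ρ.invariants ≠ ⊥ := by
  set T : Set (End K V) := Set.range fun g ↦ ρ g - 1
  have hmul (x y : End K V) (hx : x ∈ Submodule.span K T) (hy : y ∈ Submodule.span K T) :
      x * y ∈ Submodule.span K T := by
    refine (?_ : Submodule.span K T * Submodule.span K T ≤ _) (Submodule.mul_mem_mul hx hy)
    rw [Submodule.span_mul_span, Submodule.span_le]
    rintro _ ⟨_, ⟨g, rfl⟩, _, ⟨h, rfl⟩, rfl⟩
    have : (ρ g - 1) * (ρ h - 1) = (ρ (g * h) - 1) - (ρ g - 1) - (ρ h - 1) := by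
      rw [map_mul]; noncomm_ring
    simp only [SetLike.mem_coe, this]
    exact sub_mem (sub_mem (Submodule.subset_span ⟨g * h, rfl⟩)
      (Submodule.subset_span ⟨g, rfl⟩)) (Submodule.subset_span ⟨h, rfl⟩)
  set S := (Submodule.span K T).toNonUnitalSubalgebra hmul
  have htr (s : End K V) (hs : s ∈ S) : LinearMap.trace K V s = 0 := by
    induction hs using Submodule.span_induction with
    | mem x hx =>
      obtain ⟨g, rfl⟩ := hx
      exact (LinearMap.isNilpotent_trace_of_isNilpotent (hρ g)).eq_zero
    | zero => simp
    | add x y _ _ hx hy => rw [map_add, hx, hy, add_zero]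
    | smul c x _ hx => rw [map_smul, hx, smul_zero]
  obtain ⟨v, hv0, hv⟩ := S.exists_ne_zero_forall_apply_eq_zero_of_isNilpotent
    fun s hs ↦ S.isNilpotent_of_forall_trace_eq_zero htr hs
  refine (Submodule.ne_bot_iff _).2 ⟨v, fun g ↦ ?_, hv0⟩
  simpa [sub_eq_zero] using hv _ (Submodule.subset_span ⟨g, rfl⟩)

theorem Representation.inf_invariants_ne_bot_of_locally_unipotent {K V G : Type*} [Field K]
    [CharZero K] [AddCommGroup V] [Module K V] [Group G] (ρ : Representation K G V)
    (hfin : ∀ v, ∃ W : Submodule K V,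
      FiniteDimensional K W ∧ v ∈ W ∧ ∀ g, ∀ w ∈ W, ρ g w ∈ W)
    (hunip : ∀ g v, ∃ m : ℕ, ((ρ g - 1) ^ m) v = 0)
    {D : Submodule K V} (hD : ∀ g, ∀ v ∈ D, ρ g v ∈ D) (hD0 : D ≠ ⊥) :
    D ⊓ ρ.invariants ≠ ⊥ := by
  obtain ⟨v, hvD, hv0⟩ := Submodule.exists_mem_ne_zero_of_ne_bot hD0
  obtain ⟨W, hW, hvW, hWρ⟩ := hfin v
  set W' := W ⊓ D
  have : FiniteDimensional K W' := Submodule.finiteDimensional_of_le inf_le_left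
  have : Nontrivial W' :=
    Submodule.nontrivial_iff_ne_bot.2 ((Submodule.ne_bot_iff _).2 ⟨v, ⟨hvW, hvD⟩, hv0⟩)
  have hW'ρ (g : G) : W' ≤ W'.comap (ρ g) := fun w hw ↦ ⟨hWρ g w hw.1, hD g w hw.2⟩
  set σ := ρ.subrepresentation W' hW'ρ
  have hσ (g : G) : IsNilpotent (σ g - 1) := by
    have hmaps : ∀ w ∈ W', (ρ g - 1 : End K V) w ∈ W' := fun w hw ↦
      W'.sub_mem (hW'ρ g hw) hw
    have : σ g - 1 = (ρ g - 1).restrict hmaps := by ext; simp [σ, LinearMap.restrict_apply]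
    refine End.isNilpotent_iff_of_finite.2 fun w ↦ ?_
    obtain ⟨m, hm⟩ := hunip g w
    exact ⟨m, Subtype.ext (by rw [this, End.pow_restrict]; simpa using hm)⟩
  obtain ⟨w, hw, hw0⟩ := Submodule.exists_mem_ne_zero_of_ne_bot
    (σ.invariants_ne_bot_of_isNilpotent_sub_one hσ)
  exact (Submodule.ne_bot_iff _).2
    ⟨w, ⟨w.2.2, fun g ↦ congrArg Subtype.val (hw g)⟩, by simpa using hw0⟩

theorem Submodule.map_mem_colon_one_singleton {A F : Type*} [CommRing A] [CommRing F]
    [Algebra A F] {σ : A →+* A} {τ : F →+* F}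
    (hτ : ∀ a, τ (algebraMap A F a) = algebraMap A F (σ a)) {x : F} (hx : τ x = x) {b : A}
    (hb : b ∈ (1 : Submodule A F).colon {x}) : σ b ∈ (1 : Submodule A F).colon {x} := by
  obtain ⟨a, ha⟩ := mem_one.1 (mem_colon_singleton.1 hb)
  refine mem_colon_singleton.2 (mem_one.2 ⟨σ a, ?_⟩)
  rw [← hτ, ha, Algebra.smul_def, map_mul, hτ, hx, Algebra.smul_def]

theorem stmt15_general {K : Type*} [Field K] [CharZero K]
    {A : Type*} [CommRing A] [IsDomain A] [Algebra K A]
    {U : Type*} [Group U]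
    [Algebra K (FractionRing A)]
    (μ : U →* (A ≃ₐ[K] A))
    -- the action is rational: locally finite
    (hlf : ∀ a : A, ∃ W : Submodule K A, FiniteDimensional K ↥W ∧ a ∈ W ∧
      ∀ g : U, ∀ w ∈ W, μ g w ∈ W)
    -- the group acts unipotently: each g acts as a locally unipotent operator
    (hunip : ∀ g : U, ∀ a : A, ∃ m : ℕ,
      ((((μ g).toLinearMap - LinearMap.id : Module.End K A) ^ m) a = 0))
    -- the induced action on the field of rational functions
    (φ : U →* (FractionRing A ≃ₐ[K] FractionRing A))
    (hcomp : ∀ g : U, ∀ a : A,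
      φ g (algebraMap A (FractionRing A) a) = algebraMap A (FractionRing A) (μ g a)) :
    ∀ x : FractionRing A, (∀ g : U, φ g x = x) →
      ∃ a b : A, (∀ g : U, μ g a = a) ∧ (∀ g : U, μ g b = b) ∧ b ≠ 0 ∧
        x = algebraMap A (FractionRing A) a / algebraMap A (FractionRing A) b := by
  intro x hx
  let ρ : Representation K U A := (AlgEquiv.toLinearMapHom K A).comp μ
  -- the denominators of `x`: those `b` with `b • x` in the image of `A`
  let D := ((1 : Submodule A (FractionRing A)).colon {x}).restrictScalars K
  have hD (g : U) (b : A) (hb : b ∈ D) : ρ g b ∈ D :=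
    Submodule.map_mem_colon_one_singleton (σ := μ g) (τ := φ g) (hcomp g) (hx g) hb
  have hD0 : D ≠ ⊥ := by
    obtain ⟨⟨a, s⟩, hs⟩ := IsLocalization.surj (nonZeroDivisors A) x
    refine (Submodule.ne_bot_iff _).2 ⟨s, ?_, nonZeroDivisors.ne_zero s.2⟩
    exact Submodule.mem_colon_singleton.2
      (Submodule.mem_one.2 ⟨a, by rw [← hs, Algebra.smul_def, mul_comm]⟩)
  obtain ⟨b, ⟨hbD, hb : ∀ g, μ g b = b⟩, hb0⟩ := Submodule.exists_mem_ne_zero_of_ne_bot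
    (ρ.inf_invariants_ne_bot_of_locally_unipotent hlf hunip hD hD0)
  obtain ⟨a, ha⟩ := Submodule.mem_one.1 (Submodule.mem_colon_singleton.1 hbD)
  have hinj := IsFractionRing.injective A (FractionRing A)
  refine ⟨a, b, fun g ↦ hinj ?_, hb, hb0, ?_⟩
  · rw [← hcomp, ha, Algebra.smul_def, map_mul, hcomp, hb g, hx g]
  · rw [ha, Algebra.smul_def, mul_div_cancel_left₀ _ ((map_ne_zero_iff _ hinj).2 hb0)]

/-- Rosenlicht / Vinberg–Popov: for a locally finite, unipotent action of a
group U by K-algebra automorphisms on the coordinate ring A of an irreducible affine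
variety (A a finitely generated K-domain), char K = 0, every U-invariant element of the
fraction field K(V) = Frac(A) is a quotient of two U-invariant elements of A. -/
theorem stmt15 {K : Type*} [Field K] [CharZero K]
    {A : Type*} [CommRing A] [IsDomain A] [Algebra K A] [Algebra.FiniteType K A]
    {U : Type*} [Group U]
    [Algebra K (FractionRing A)] [IsScalarTower K A (FractionRing A)]
    (μ : U →* (A ≃ₐ[K] A))
    -- the action is rational: locally finite
    (hlf : ∀ a : A, ∃ W : Submodule K A, FiniteDimensional K ↥W ∧ a ∈ W ∧
      ∀ g : U, ∀ w ∈ W, μ g w ∈ W)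
    -- the group acts unipotently: each g acts as a locally unipotent operator
    (hunip : ∀ g : U, ∀ a : A, ∃ m : ℕ,
      ((((μ g).toLinearMap - LinearMap.id : Module.End K A) ^ m) a = 0))
    -- the induced action on the field of rational functions
    (φ : U →* (FractionRing A ≃ₐ[K] FractionRing A))
    (hcomp : ∀ g : U, ∀ a : A,
      φ g (algebraMap A (FractionRing A) a) = algebraMap A (FractionRing A) (μ g a)) :
    ∀ x : FractionRing A, (∀ g : U, φ g x = x) →
      ∃ a b : A, (∀ g : U, μ g a = a) ∧ (∀ g : U, μ g b = b) ∧ b ≠ 0 ∧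
        x = algebraMap A (FractionRing A) a / algebraMap A (FractionRing A) b :=
  stmt15_general μ hlf hunip φ hcomp
end

section
/- Let X be an invertible n×n matrix over a field, and let S_{lower} be the determinant of the submatrix of adjugate(X) with rows {k,…,n} and columns J, where |J| = n-k+1. Then this minor, as a function of X, is invariant under X ↦ X·g for every upper unitriangular matrix g: M_{[k,n],J}(adjugate(X·g)) = M_{[k,n],J}(adjugate(X)). -/
/-- Auxiliary: if A is "upper unitriangular relative to an upward-closed embedded
row set r", then minors of A * B on rows r equal the corresponding minors of B. -/
lemma stmt17_aux {K : Type*} [Field K] {n m : ℕ}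
    (A B : Matrix (Fin n) (Fin n) K) (r : Fin m → Fin n) (hr : StrictMono r)
    (hA0 : ∀ i j : Fin n, j < i → A i j = 0) (hA1 : ∀ i, A i i = 1)
    (hclosed : ∀ (j : Fin n) (t : Fin m), r t ≤ j → ∃ u, r u = j)
    (c : Fin m → Fin n) :
    ((A * B).submatrix r c).det = (B.submatrix r c).det := by
  have key : (A * B).submatrix r c = (A.submatrix r r) * (B.submatrix r c) := by
    ext t s
    simp only [Matrix.submatrix_apply, Matrix.mul_apply]
    have him : ∑ j ∈ Finset.univ.image r, A (r t) j * B j (c s)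
        = ∑ u : Fin m, A (r t) (r u) * B (r u) (c s) :=
      Finset.sum_image (by intro x _ y _ h; exact hr.injective h)
    rw [← him]
    symm
    apply Finset.sum_subset (Finset.subset_univ _)
    intro j _ hj
    have hjlt : j < r t := by
      by_contra h
      push_neg at h
      obtain ⟨u, hu⟩ := hclosed j t h
      exact hj (Finset.mem_image.2 ⟨u, Finset.mem_univ u, hu⟩)
    rw [hA0 _ _ hjlt, zero_mul]
  rw [key, Matrix.det_mul]
  have htri : (A.submatrix r r).BlockTriangular id := by
    intro t s hts
    exact hA0 _ _ (hr hts)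
  rw [Matrix.det_of_upperTriangular htri]
  simp only [Matrix.submatrix_apply]
  rw [Finset.prod_eq_one (fun x _ => hA1 (r x)), one_mul]

/-- minors of adjugate(X) whose row set is a terminal interval {k,…,n} are
invariant under X ↦ X·g for g upper unitriangular. -/
theorem stmt17 {K : Type*} [Field K] {n : ℕ} (k : ℕ) (hk1 : 1 ≤ k) (hk2 : k ≤ n)
    (X g : Matrix (Fin n) (Fin n) K) (hX : IsUnit X.det)
    (hdiag : ∀ i, g i i = 1)
    (hlow : ∀ i j : Fin n, j < i → g i j = 0)
    (c : Fin (n - k + 1) → Fin n) (hc : Function.Injective c) :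
    ((X * g).adjugate.submatrix
        (fun t : Fin (n - k + 1) => (⟨k - 1 + t.val, by have := t.isLt; omega⟩ : Fin n)) c).det
      = (X.adjugate.submatrix
        (fun t : Fin (n - k + 1) => (⟨k - 1 + t.val, by have := t.isLt; omega⟩ : Fin n)) c).det := by
  have hA0 : ∀ i j : Fin n, j < i → g.adjugate i j = 0 := by
    intro i j hji
    rw [Matrix.adjugate_apply]
    have htri : (g.updateRow j (Pi.single i 1)).BlockTriangular id := by
      intro a b hab
      rcases eq_or_ne a j with rfl | haj
      · rw [Matrix.updateRow_self]
        exact Pi.single_eq_of_ne (ne_of_lt (lt_trans hab hji)) _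
      · rw [Matrix.updateRow_ne haj]
        exact hlow a b hab
    rw [Matrix.det_of_upperTriangular htri]
    apply Finset.prod_eq_zero (Finset.mem_univ j)
    rw [Matrix.updateRow_self]
    exact Pi.single_eq_of_ne (ne_of_lt hji) _
  have hA1 : ∀ i : Fin n, g.adjugate i i = 1 := by
    intro i
    rw [Matrix.adjugate_apply]
    have htri : (g.updateRow i (Pi.single i 1)).BlockTriangular id := by
      intro a b hab
      rcases eq_or_ne a i with rfl | hai
      · rw [Matrix.updateRow_self]
        exact Pi.single_eq_of_ne (ne_of_lt hab) _
      · rw [Matrix.updateRow_ne hai]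
        exact hlow a b hab
    rw [Matrix.det_of_upperTriangular htri]
    apply Finset.prod_eq_one
    intro a _
    rcases eq_or_ne a i with rfl | hai
    · rw [Matrix.updateRow_self, Pi.single_eq_same]
    · rw [Matrix.updateRow_ne hai]
      exact hdiag a
  rw [Matrix.adjugate_mul_distrib]
  refine stmt17_aux g.adjugate X.adjugate _ ?_ hA0 hA1 ?_ c
  · intro t s hts
    simp only [Fin.lt_def]
    exact by omega
  · intro j t hle
    have h1 : k - 1 + t.val ≤ j.val := hle
    have h2 := j.isLt
    have h3 := t.isLt
    refine ⟨⟨j.val - (k - 1), by omega⟩, ?_⟩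
    apply Fin.ext
    show k - 1 + (j.val - (k - 1)) = j.val
    omega
end
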